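/- arXiv:2407.15818 — 3 statements merged into one kernel-verified Lean document; each statement's English description precedes it below -/
import Mathlib

section
/- Let S^n be the n-sphere with the geodesic metric (of diameter π), let δ > 0 and k ≥ 0 an integer. If δ < cov_{S^n}(2k+2), then for any points x_1, ..., x_{2k+2} ∈ S^n, the intersection of the open balls B(x_i; π − δ) is nonempty. -/
open Real

/-- The geodesic (angular) distance on the unit sphere in `ℝ^{n+1}`. -/
noncomputable def geoDist {n : ℕ} (x y : EuclideanSpace ℝ (Fin (n + 1))) : ℝ :=
  Real.arccos (inner ℝ x y)

/-- The unit sphere `S^n` as a subset of `ℝ^{n+1}`. -/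
def unitSphere (n : ℕ) : Set (EuclideanSpace ℝ (Fin (n + 1))) := {y | ‖y‖ = 1}

/-- If `δ < cov_{S^n}(2k+2)` (the covering radius of the sphere by `2k+2` closed geodesic
balls), then any `2k+2` open geodesic balls of radius `π − δ` in `S^n` have a common point. -/
theorem sphere_balls_intersect (n : ℕ) (hn : 1 ≤ n) (k : ℕ) (δ : ℝ) (hδ : 0 < δ)
    (hδcov : δ < sInf {r : ℝ | 0 ≤ r ∧ ∃ x : Fin (2 * k + 2) → EuclideanSpace ℝ (Fin (n + 1)),
      (∀ i, x i ∈ unitSphere n) ∧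
      ∀ y ∈ unitSphere n, ∃ i, geoDist (x i) y ≤ r})
    (x : Fin (2 * k + 2) → EuclideanSpace ℝ (Fin (n + 1))) (hx : ∀ i, x i ∈ unitSphere n) :
    ∃ y ∈ unitSphere n, ∀ i, geoDist (x i) y < Real.pi - δ := by
  by_contra h
  push_neg at h
  -- the antipodes cover with radius δ
  have hmem : δ ∈ {r : ℝ | 0 ≤ r ∧ ∃ x : Fin (2 * k + 2) → EuclideanSpace ℝ (Fin (n + 1)),
      (∀ i, x i ∈ unitSphere n) ∧
      ∀ y ∈ unitSphere n, ∃ i, geoDist (x i) y ≤ r} := by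
    refine ⟨le_of_lt hδ, fun i => -x i, fun i => ?_, fun y hy => ?_⟩
    · simpa [unitSphere] using hx i
    · obtain ⟨i, hi⟩ := h y hy
      refine ⟨i, ?_⟩
      have : geoDist (-x i) y = Real.pi - geoDist (x i) y := by
        simp [geoDist, inner_neg_left, Real.arccos_neg]
      rw [this]
      linarith
  have hbdd : BddBelow {r : ℝ | 0 ≤ r ∧ ∃ x : Fin (2 * k + 2) → EuclideanSpace ℝ (Fin (n + 1)),
      (∀ i, x i ∈ unitSphere n) ∧
      ∀ y ∈ unitSphere n, ∃ i, geoDist (x i) y ≤ r} := ⟨0, fun r hr => hr.1⟩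
  have := csInf_le hbdd hmem
  linarith
end

section
/- Let M be a metric space, k ≥ 0 an integer, and ρ > 0 such that every collection of 2k+2 open balls of radius ρ in M has nonempty intersection. Let r > ρ, and let X be a metric space with Gromov–Hausdorff distance d_GH(X, M) < (r − ρ)/2. Then every collection of 2k+2 open balls of radius r in X has nonempty intersection. -/
/-- Rigidity of the ball-intersection property: if every collection of `2k+2` open balls of
radius `ρ` in `M` has a common point, `r > ρ`, and `d_GH(X, M) < (r − ρ)/2`, then every
collection of `2k+2` open balls of radius `r` in `X` has a common point. -/
theorem balls_intersect_of_GH_close {M X : Type*}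
    [MetricSpace M] [CompactSpace M] [Nonempty M]
    [MetricSpace X] [CompactSpace X] [Nonempty X]
    (k : ℕ) (ρ r : ℝ) (hρ : 0 < ρ) (hr : ρ < r)
    (hM : ∀ y : Fin (2 * k + 2) → M, (⋂ i, Metric.ball (y i) ρ).Nonempty)
    (hGH : GromovHausdorff.ghDist X M < (r - ρ) / 2) :
    ∀ x : Fin (2 * k + 2) → X, (⋂ i, Metric.ball (x i) r).Nonempty := by
  intro x
  set ε := (r - ρ) / 2 with hε
  set injl := GromovHausdorff.optimalGHInjl X M
  set injr := GromovHausdorff.optimalGHInjr X M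
  have hne : EMetric.hausdorffEdist (Set.range injl) (Set.range injr) ≠ ⊤ := by
    apply Metric.hausdorffEdist_ne_top_of_nonempty_of_bounded
    · exact Set.range_nonempty _
    · exact Set.range_nonempty _
    · exact (isCompact_range (GromovHausdorff.isometry_optimalGHInjl X M).continuous).isBounded
    · exact (isCompact_range (GromovHausdorff.isometry_optimalGHInjr X M).continuous).isBounded
  have hH : Metric.hausdorffDist (Set.range injl) (Set.range injr) < ε := by
    rw [GromovHausdorff.hausdorffDist_optimal]; exact hGH
  have h1 : ∀ i, ∃ m : M, dist (injl (x i)) (injr m) < ε := by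
    intro i
    obtain ⟨b, hb, hbd⟩ := Metric.exists_dist_lt_of_hausdorffDist_lt
      (Set.mem_range_self (x i)) hH hne
    obtain ⟨m, rfl⟩ := hb
    exact ⟨m, hbd⟩
  choose m hm using h1
  obtain ⟨z, hz⟩ := hM m
  simp only [Set.mem_iInter, Metric.mem_ball] at hz
  obtain ⟨b, hb, hbd⟩ := Metric.exists_dist_lt_of_hausdorffDist_lt'
    (Set.mem_range_self z) hH hne
  obtain ⟨x0, rfl⟩ := hb
  refine ⟨x0, ?_⟩
  simp only [Set.mem_iInter, Metric.mem_ball]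
  intro i
  have key : dist (injl x0) (injl (x i)) < r := by
    calc dist (injl x0) (injl (x i))
        ≤ dist (injl x0) (injr z) + dist (injr z) (injr (m i)) + dist (injr (m i)) (injl (x i)) :=
          dist_triangle4 _ _ _ _
      _ < ε + ρ + ε := by
          have h2 : dist (injr z) (injr (m i)) < ρ := by
            rw [(GromovHausdorff.isometry_optimalGHInjr X M).dist_eq]
            exact hz i
          have h3 : dist (injr (m i)) (injl (x i)) < ε := by
            rw [dist_comm]; exact hm i
          gcongr
      _ = r := by rw [hε]; ring
  rwa [(GromovHausdorff.isometry_optimalGHInjl X M).dist_eq] at key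
end

section
/- Let M be a metric space and suppose a metric d on X ⊔ M restricts to the given metrics on X and M and the Hausdorff distance between X and M in X ⊔ M is less than ν. Fix an integer N ≥ 1 and ρ > 0, and assume every N-tuple of open balls of radius ρ in M intersects. If r > ρ + 2ν, then for any x_1, ..., x_N ∈ X there exists m̃ ∈ X with d(m̃, x_i) < r for all i; in particular the open balls B_X(x_i; r) have a common point. -/
/-- Let `X` and `M` be subsets of a common metric space `Z` whose Hausdorff distance is less
than `ν` (every point of one is within `ν` of the other). If every `N`-tuple of open balls
of radius `ρ` centered in `M` has a common point in `M`, and `r > ρ + 2ν`, then for any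
`x_1, …, x_N ∈ X` there is `m̃ ∈ X` with `d(m̃, x_i) < r` for all `i`; in particular the
open balls `B_X(x_i; r)` have a common point. -/
theorem balls_intersect_of_hausdorff_close {Z : Type*} [MetricSpace Z]
    (X M : Set Z) (ν ρ r : ℝ) (hν : 0 < ν) (hρ : 0 < ρ) (N : ℕ) (hN : 1 ≤ N)
    (hXM : ∀ p ∈ X, ∃ q ∈ M, dist p q < ν)
    (hMX : ∀ q ∈ M, ∃ p ∈ X, dist q p < ν)
    (hballs : ∀ y : Fin N → Z, (∀ i, y i ∈ M) → ∃ m ∈ M, ∀ i, dist m (y i) < ρ)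
    (hr : ρ + 2 * ν < r) :
    ∀ x : Fin N → Z, (∀ i, x i ∈ X) → ∃ mt ∈ X, ∀ i, dist mt (x i) < r := by
  intro x hx
  choose y hyM hyd using fun i => hXM (x i) (hx i)
  obtain ⟨m, hmM, hm⟩ := hballs y hyM
  obtain ⟨mt, hmtX, hmt⟩ := hMX m hmM
  refine ⟨mt, hmtX, fun i => ?_⟩
  calc dist mt (x i) ≤ dist mt m + dist m (y i) + dist (y i) (x i) := dist_triangle4 _ _ _ _
    _ < ν + ρ + ν := by
        have := hyd i
        rw [dist_comm] at hmt
        rw [dist_comm] at this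
        linarith [hm i]
    _ < r := by linarith
end
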